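/- For every n ≥ 2 and every k with 2 ≤ k ≤ n: (i) for every complete NFA with n states and every subset S of size k of the state set, if some word synchronizes S then the shortest such word has length at most 2^n − n − 2^{n−k}; and (ii) there exists a complete NFA with n states and a subset S of size k whose shortest synchronizing word has length exactly 2^n − n − 2^{n−k}. Hence the maximum synchronization length for state subsets of size k in complete NFAs with n states is 2^n − n − 2^{n−k}. -/

import Mathlib

/-- Action of an NFA transition function on a subset of states along a word. -/
def nfaRun {n m : ℕ} (δ : Fin n → Fin m → Finset (Fin n)) :
    Finset (Fin n) → List (Fin m) → Finset (Fin n)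
  | S, [] => S
  | S, a :: w => nfaRun δ (S.biUnion fun q => δ q a) w

/-- A word `w` synchronizes the subset `S` in the NFA `δ`. -/
def nfaSync {n m : ℕ} (δ : Fin n → Fin m → Finset (Fin n)) (S : Finset (Fin n))
    (w : List (Fin m)) : Prop :=
  (nfaRun δ S w).card = 1

/-- `l` is the length of a shortest word synchronizing `S` in the NFA `δ`. -/
def nfaShortestSync {n m : ℕ} (δ : Fin n → Fin m → Finset (Fin n)) (S : Finset (Fin n))
    (l : ℕ) : Prop :=
  (∃ w, nfaSync δ S w ∧ w.length = l) ∧ ∀ w, nfaSync δ S w → l ≤ w.length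

/-
A shortest word synchronizing `S` passes through pairwise distinct configurations, and every
configuration strictly between the start and the end has at least two states and does not contain
`S` (otherwise a proper suffix of the word would already synchronize `S`). There are exactly
`2^n - (n + 1) - 2^(n-k)` such sets, which gives the upper bound.

For the lower bound, list these sets as `T₁, …, T_M` in order of non-increasing size, put
`T₀ = S` and let `T_{M+1}` be a singleton. The letter `aⱼ` maps `Tⱼ` onto `Tⱼ₊₁` and every set
not contained in `Tⱼ` onto the whole state set. Since no `Tᵢ` is contained in a later `Tⱼ`, a
letter moves `Tᵢ` either to some `Tⱼ₊₁` with `j ≤ i` or to the whole state set, which is `T₀` or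
can never be synchronized; hence the synchronizing word `a₀ a₁ ⋯ a_M` is shortest.
-/

namespace Finset

variable {α : Type*} [Fintype α] [DecidableEq α]

def nonSupersets (S : Finset α) : Finset (Finset α) :=
  univ.filter fun T => 2 ≤ T.card ∧ ¬ S ⊆ T

theorem card_filter_card_le_one :
    (univ.filter fun T : Finset α => T.card ≤ 1).card = Fintype.card α + 1 := by
  have hsplit : (univ.filter fun T : Finset α => T.card ≤ 1) =
      powersetCard 0 univ ∪ powersetCard 1 univ := by
    ext T; simp only [mem_filter, mem_univ, true_and, mem_union, mem_powersetCard,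
      subset_univ]; omega
  rw [hsplit, card_union_of_disjoint, card_powersetCard, card_powersetCard, card_univ]
  · simp [add_comm]
  · exact disjoint_left.2 fun T h0 h1 => by
      rw [mem_powersetCard] at h0 h1; omega

theorem card_filter_superset (S : Finset α) :
    (univ.filter fun T : Finset α => S ⊆ T).card = 2 ^ (Fintype.card α - S.card) := by
  rw [← card_univ, ← card_Icc_finset (subset_univ S)]
  congr 1; ext T; simp

theorem card_nonSupersets_add_one {S : Finset α} (hS : 2 ≤ S.card) :
    (nonSupersets S).card + 1 =
      2 ^ Fintype.card α - Fintype.card α - 2 ^ (Fintype.card α - S.card) := by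
  have hsmall := card_filter_card_le_one (α := α)
  have hsup := card_filter_superset S
  have hsplit₁ := card_filter_add_card_filter_not (s := (univ : Finset (Finset α)))
    (fun T => T.card ≤ 1)
  have hsplit₂ := card_filter_add_card_filter_not
    (s := univ.filter fun T : Finset α => ¬ T.card ≤ 1) (fun T => S ⊆ T)
  rw [filter_filter, filter_filter] at hsplit₂
  have hbig : (univ.filter fun T : Finset α => ¬ T.card ≤ 1 ∧ S ⊆ T) =
      univ.filter fun T => S ⊆ T := by
    ext T; simp only [mem_filter, mem_univ, true_and]
    exact ⟨And.right, fun h => ⟨(card_le_card h).trans_lt' hS |>.not_ge, h⟩⟩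
  have hbad : (univ.filter fun T : Finset α => ¬ T.card ≤ 1 ∧ ¬ S ⊆ T) = nonSupersets S := by
    ext T; simp only [nonSupersets, mem_filter, mem_univ, true_and, not_le]; rfl
  rw [hbig, hbad] at hsplit₂
  rw [card_univ, Fintype.card_finset] at hsplit₁
  omega

end Finset

theorem List.exists_pairwise_not_subset {α : Type*} [DecidableEq α] (A : Finset (Finset α)) :
    ∃ l : List (Finset α), l.toFinset = A ∧ l.Pairwise fun T T' => ¬ T ⊆ T' := by
  let l := A.toList.mergeSort fun T T' => decide (T'.card ≤ T.card)
  have hperm : l.Perm A.toList := List.mergeSort_perm _ _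
  have hsorted : l.Pairwise fun T T' => decide (T'.card ≤ T.card) :=
    List.pairwise_mergeSort (fun _ _ _ => by simp only [decide_eq_true_eq]; omega)
      (fun _ _ => by simp only [Bool.or_eq_true, decide_eq_true_eq]; omega) _
  refine ⟨l, by rw [List.toFinset_eq_of_perm _ _ hperm, Finset.toList_toFinset], ?_⟩
  have hnodup : l.Nodup := hperm.nodup_iff.2 A.nodup_toList
  refine (hsorted.and hnodup).imp fun ⟨hcard, hne⟩ hsub => hne ?_
  exact Finset.eq_of_subset_of_card_le hsub (by simpa using hcard)

section Run

variable {n m : ℕ} (δ : Fin n → Fin m → Finset (Fin n))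

theorem nfaRun_append (S : Finset (Fin n)) (u v : List (Fin m)) :
    nfaRun δ S (u ++ v) = nfaRun δ (nfaRun δ S u) v := by
  induction u generalizing S with
  | nil => rfl
  | cons a u ih => exact ih _

theorem nfaRun_mono {S T : Finset (Fin n)} (h : S ⊆ T) (w : List (Fin m)) :
    nfaRun δ S w ⊆ nfaRun δ T w := by
  induction w generalizing S T with
  | nil => exact h
  | cons a w ih => exact ih (Finset.biUnion_subset_biUnion_of_subset_left _ h)

variable {δ}

theorem nfaRun_nonempty (hδ : ∀ q a, (δ q a).Nonempty) {S : Finset (Fin n)} (hS : S.Nonempty)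
    (w : List (Fin m)) : (nfaRun δ S w).Nonempty := by
  induction w generalizing S with
  | nil => exact hS
  | cons a w ih =>
    obtain ⟨q, hq⟩ := hS
    exact ih ((hδ q a).mono (Finset.subset_biUnion_of_mem (fun q => δ q a) hq))

theorem exists_nfaShortestSync {S : Finset (Fin n)} (h : ∃ w, nfaSync δ S w) :
    ∃ l, nfaShortestSync δ S l := by
  classical
  obtain ⟨w, hw⟩ := h
  have hl : ∃ l, ∃ w, nfaSync δ S w ∧ w.length = l := ⟨_, w, hw, rfl⟩
  exact ⟨Nat.find hl, Nat.find_spec hl, fun w hw => Nat.find_min' hl ⟨w, hw, rfl⟩⟩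

end Run

section Shortest

variable {n m : ℕ} {δ : Fin n → Fin m → Finset (Fin n)} {S : Finset (Fin n)}
  {w : List (Fin m)}

theorem nfaRun_take_injOn (hw : nfaSync δ S w)
    (hmin : ∀ w', nfaSync δ S w' → w.length ≤ w'.length) :
    Set.InjOn (fun i => nfaRun δ S (w.take i)) (Set.Iic w.length) := by
  suffices ∀ i j, i < j → j ≤ w.length → nfaRun δ S (w.take i) ≠ nfaRun δ S (w.take j) by
    intro i hi j hj hij
    by_contra hne
    rcases Nat.lt_or_gt_of_ne hne with h | h
    · exact this i j h hj hij
    · exact this j i h hi hij.symm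
  intro i j hij hj heq
  have hshort : nfaSync δ S (w.take i ++ w.drop j) := by
    rwa [nfaSync, nfaRun_append, heq, ← nfaRun_append, List.take_append_drop]
  have := hmin _ hshort
  simp only [List.length_append, List.length_take, List.length_drop] at this
  omega

theorem not_subset_nfaRun_take (hδ : ∀ q a, (δ q a).Nonempty) (hS : S.Nonempty)
    (hw : nfaSync δ S w) (hmin : ∀ w', nfaSync δ S w' → w.length ≤ w'.length)
    {i : ℕ} (hi : 0 < i) (hiw : i ≤ w.length) : ¬ S ⊆ nfaRun δ S (w.take i) := by
  intro hsub
  obtain ⟨x, hx⟩ := Finset.card_eq_one.1 hw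
  have hsub' : nfaRun δ S (w.drop i) ⊆ {x} := by
    rw [← hx, ← List.take_append_drop i w, nfaRun_append δ S (w.take i), List.drop_left']
    · exact nfaRun_mono δ hsub _
    · rw [List.length_take]; omega
  have hshort : nfaSync δ S (w.drop i) := by
    rw [nfaSync, (Finset.subset_singleton_iff.1 hsub').resolve_left
      (nfaRun_nonempty hδ hS _).ne_empty, Finset.card_singleton]
  have := hmin _ hshort
  rw [List.length_drop] at this
  omega

theorem two_le_card_nfaRun_take (hδ : ∀ q a, (δ q a).Nonempty) (hS : S.Nonempty)
    (hmin : ∀ w', nfaSync δ S w' → w.length ≤ w'.length)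
    {i : ℕ} (hiw : i < w.length) : 2 ≤ (nfaRun δ S (w.take i)).card := by
  have hpos := (nfaRun_nonempty hδ hS (w.take i)).card_pos
  by_contra! hlt
  have := hmin _ (show nfaSync δ S (w.take i) by rw [nfaSync]; omega)
  rw [List.length_take] at this
  omega

theorem nfaShortestSync_le (hδ : ∀ q a, (δ q a).Nonempty) (hS : 2 ≤ S.card) {l : ℕ}
    (hl : nfaShortestSync δ S l) : l ≤ 2 ^ n - n - 2 ^ (n - S.card) := by
  obtain ⟨⟨w, hw, rfl⟩, hmin⟩ := hl
  have hSne : S.Nonempty := Finset.card_pos.1 (by omega)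
  have hmaps : ∀ i ∈ Finset.Ico 1 w.length,
      nfaRun δ S (w.take i) ∈ Finset.nonSupersets S := by
    intro i hi
    rw [Finset.mem_Ico] at hi
    simp only [Finset.nonSupersets, Finset.mem_filter, Finset.mem_univ, true_and]
    exact ⟨two_le_card_nfaRun_take hδ hSne hmin hi.2,
      not_subset_nfaRun_take hδ hSne hw hmin hi.1 hi.2.le⟩
  have hinj : Set.InjOn (fun i => nfaRun δ S (w.take i)) (Finset.Ico 1 w.length) :=
    (nfaRun_take_injOn hw hmin).mono fun i hi => by
      simp only [Finset.coe_Ico, Set.mem_Ico] at hi; exact Set.mem_Iic.2 hi.2.le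
  have hcard := Finset.card_le_card_of_injOn _ hmaps hinj
  have hcount := Finset.card_nonSupersets_add_one hS
  rw [Nat.card_Ico] at hcard
  rw [Fintype.card_fin] at hcount
  omega

end Shortest

section Chain

variable {n : ℕ} {T : ℕ → Finset (Fin n)} {N : ℕ}

def chainNFA (T : ℕ → Finset (Fin n)) (N : ℕ) (q : Fin n) (a : Fin N) : Finset (Fin n) :=
  if q ∈ T a then T (a + 1) else Finset.univ

theorem biUnion_chainNFA {C : Finset (Fin n)} (hC : C.Nonempty) (a : Fin N) :
    C.biUnion (fun q => chainNFA T N q a) = if C ⊆ T a then T (a + 1) else Finset.univ := by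
  split_ifs with h
  · calc C.biUnion (fun q => chainNFA T N q a) = C.sup fun _ => T (a + 1) := by
          rw [Finset.sup_eq_biUnion]
          exact Finset.biUnion_congr rfl fun q hq => if_pos (h hq)
      _ = T (a + 1) := Finset.sup_const hC _
  · obtain ⟨q, hq, hqa⟩ := Finset.not_subset.1 h
    refine Finset.eq_univ_of_forall fun x => Finset.mem_biUnion.2 ⟨q, hq, ?_⟩
    simp [chainNFA, hqa]

theorem chainNFA_nonempty (hcard : ∀ j < N, 2 ≤ (T j).card) (hlast : (T N).card = 1)
    (q : Fin n) (a : Fin N) : (chainNFA T N q a).Nonempty := by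
  unfold chainNFA
  split_ifs
  · rcases (show (a : ℕ) + 1 ≤ N from a.isLt).lt_or_eq with h | h
    · exact Finset.card_pos.1 (zero_lt_two.trans_le (hcard _ h))
    · exact Finset.card_pos.1 (by rw [h, hlast]; omega)
  · exact ⟨q, Finset.mem_univ q⟩

theorem nfaRun_chainNFA_drop_finRange (hcard : ∀ j < N, 2 ≤ (T j).card) {j d : ℕ}
    (hjd : j + d = N) : nfaRun (chainNFA T N) (T j) ((List.finRange N).drop j) = T N := by
  induction d generalizing j with
  | zero =>
    subst hjd
    rw [List.drop_of_length_le (by rw [List.length_finRange]; omega)]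
    rfl
  | succ d ih =>
    have hj : j < N := by omega
    rw [List.drop_eq_getElem_cons (by rwa [List.length_finRange]), List.getElem_finRange, nfaRun,
      biUnion_chainNFA (Finset.card_pos.1 (zero_lt_two.trans_le (hcard _ hj))), Fin.val_cast,
      if_pos subset_rfl]
    exact ih (j := j + 1) (by omega)

theorem eq_univ_of_card_nfaRun_chainNFA_univ (hcard : ∀ j < N, 2 ≤ (T j).card)
    (hanti : ∀ i j, i < j → j < N → ¬ T i ⊆ T j) (hN : 0 < N) (w : List (Fin N))
    (hw : (nfaRun (chainNFA T N) Finset.univ w).card = 1) : T 0 = Finset.univ := by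
  have h0 := Finset.card_pos.1 (zero_lt_two.trans_le (hcard _ hN))
  induction w with
  | nil =>
    have := Finset.card_le_card (Finset.subset_univ (T 0))
    have := hcard 0 hN
    change Finset.univ.card = 1 at hw
    omega
  | cons a w ih =>
    rw [nfaRun, biUnion_chainNFA (h0.mono (Finset.subset_univ _))] at hw
    split_ifs at hw with h
    · have ha : (a : ℕ) = 0 := by
        by_contra ha
        exact hanti 0 a (Nat.pos_of_ne_zero ha) a.isLt ((Finset.subset_univ _).trans h)
      rw [ha] at h
      exact Finset.univ_subset_iff.1 h
    · exact ih hw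

theorem le_length_of_card_nfaRun_chainNFA (hcard : ∀ j < N, 2 ≤ (T j).card)
    (hanti : ∀ i j, i < j → j < N → ¬ T i ⊆ T j) (w : List (Fin N)) :
    ∀ j, (nfaRun (chainNFA T N) (T j) w).card = 1 → N - j ≤ w.length := by
  induction w with
  | nil =>
    intro j hj
    change (T j).card = 1 at hj
    by_contra h
    have := hcard j (by omega)
    omega
  | cons a w ih =>
    intro j hj
    rcases le_or_gt N j with hNj | hjN
    · omega
    rw [nfaRun, biUnion_chainNFA (Finset.card_pos.1 (zero_lt_two.trans_le (hcard _ hjN)))] at hj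
    rw [List.length_cons]
    split_ifs at hj with hsub
    · have ha : (a : ℕ) ≤ j := not_lt.1 fun h => hanti j a h a.isLt hsub
      have := ih _ hj
      omega
    · have h0 := eq_univ_of_card_nfaRun_chainNFA_univ hcard hanti (by omega) w hj
      have := ih 0 (h0 ▸ hj)
      omega

theorem nfaShortestSync_chainNFA (hcard : ∀ j < N, 2 ≤ (T j).card)
    (hanti : ∀ i j, i < j → j < N → ¬ T i ⊆ T j) (hlast : (T N).card = 1) :
    nfaShortestSync (chainNFA T N) (T 0) N := by
  have hrun := nfaRun_chainNFA_drop_finRange hcard (zero_add N)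
  rw [List.drop_zero] at hrun
  refine ⟨⟨List.finRange N, by rw [nfaSync, hrun, hlast], List.length_finRange⟩, fun w hw => ?_⟩
  simpa using le_length_of_card_nfaRun_chainNFA hcard hanti w 0 hw

end Chain

theorem exists_complete_nfaShortestSync_card_nonSupersets_add_one {n : ℕ} {S : Finset (Fin n)}
    (hS : 2 ≤ S.card) :
    ∃ δ : Fin n → Fin ((Finset.nonSupersets S).card + 1) → Finset (Fin n),
      (∀ q a, (δ q a).Nonempty) ∧ nfaShortestSync δ S ((Finset.nonSupersets S).card + 1) := by
  obtain ⟨t, -⟩ := Finset.card_pos.1 (by omega : 0 < S.card)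
  obtain ⟨l, hlA, hl⟩ := List.exists_pairwise_not_subset (Finset.nonSupersets S)
  have hlen : l.length = (Finset.nonSupersets S).card := by
    rw [← hlA, List.toFinset_card_of_nodup (hl.imp fun h heq => h heq.subset)]
  have hmemA : ∀ T ∈ l, 2 ≤ T.card ∧ ¬ S ⊆ T := fun T hT => by
    have := hlA ▸ List.mem_toFinset.2 hT
    simpa only [Finset.nonSupersets, Finset.mem_filter, Finset.mem_univ, true_and] using this
  have hchain : (S :: l).Pairwise fun T T' => ¬ T ⊆ T' :=
    List.pairwise_cons.2 ⟨fun T hT => (hmemA T hT).2, hl⟩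
  rw [← hlen]
  let T : ℕ → Finset (Fin n) := fun j => (S :: l).getD j {t}
  have hT : ∀ j (hj : j < l.length + 1), T j = (S :: l)[j] := fun j hj =>
    List.getD_eq_getElem _ _ hj
  have hcard : ∀ j < l.length + 1, 2 ≤ (T j).card := by
    intro j hj
    rcases List.mem_cons.1 (hT j hj ▸ List.getElem_mem hj) with h | h
    · rwa [h]
    · exact (hmemA _ h).1
  have hanti : ∀ i j, i < j → j < l.length + 1 → ¬ T i ⊆ T j := fun i j hij hj => by
    rw [hT i (hij.trans hj), hT j hj]
    exact List.pairwise_iff_getElem.1 hchain i j _ hj hij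
  have hlast : (T (l.length + 1)).card = 1 := by
    rw [show T (l.length + 1) = {t} from List.getD_eq_default _ _ le_rfl, Finset.card_singleton]
  exact ⟨chainNFA T _, chainNFA_nonempty hcard hlast, nfaShortestSync_chainNFA hcard hanti hlast⟩

theorem stmt4 (n k : ℕ) (hk : 2 ≤ k) (hkn : k ≤ n) :
    -- (i) upper bound for every complete NFA and every subset of size k
    (∀ (m : ℕ) (δ : Fin n → Fin m → Finset (Fin n)),
      (∀ q a, (δ q a).Nonempty) →
      ∀ S : Finset (Fin n), S.card = k → (∃ w, nfaSync δ S w) →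
        ∃ w, nfaSync δ S w ∧ w.length ≤ 2 ^ n - n - 2 ^ (n - k)) ∧
    -- (ii) the bound is attained
    (∃ (m : ℕ) (δ : Fin n → Fin m → Finset (Fin n)),
      (∀ q a, (δ q a).Nonempty) ∧
      ∃ S : Finset (Fin n), S.card = k ∧
        nfaShortestSync δ S (2 ^ n - n - 2 ^ (n - k))) ∧
    -- hence: the maximum subset synchronization length is exactly the bound
    IsGreatest {l : ℕ | ∃ (m : ℕ) (δ : Fin n → Fin m → Finset (Fin n)),
        (∀ q a, (δ q a).Nonempty) ∧ ∃ S : Finset (Fin n), S.card = k ∧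
          nfaShortestSync δ S l}
      (2 ^ n - n - 2 ^ (n - k)) := by
  have hattained : ∃ (m : ℕ) (δ : Fin n → Fin m → Finset (Fin n)),
      (∀ q a, (δ q a).Nonempty) ∧ ∃ S : Finset (Fin n), S.card = k ∧
        nfaShortestSync δ S (2 ^ n - n - 2 ^ (n - k)) := by
    obtain ⟨S, -, hS⟩ := Finset.exists_subset_card_eq (hkn.trans_eq (Finset.card_fin n).symm)
    have hS₂ : 2 ≤ S.card := hS ▸ hk
    obtain ⟨δ, hδ, hsync⟩ := exists_complete_nfaShortestSync_card_nonSupersets_add_one hS₂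
    have hcount := Finset.card_nonSupersets_add_one hS₂
    rw [Fintype.card_fin, hS] at hcount
    exact ⟨_, δ, hδ, S, hS, hcount ▸ hsync⟩
  refine ⟨fun m δ hδ S hS hsync => ?_, hattained, hattained, ?_⟩
  · obtain ⟨l, hl⟩ := exists_nfaShortestSync hsync
    obtain ⟨w, hw, hwl⟩ := hl.1
    subst hS
    exact ⟨w, hw, hwl ▸ nfaShortestSync_le hδ hk hl⟩
  · rintro l ⟨m, δ, hδ, S, rfl, hl⟩
    exact nfaShortestSync_le hδ hk hl
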